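/- Let (k, P⃗, p⃗) and (k', P⃗', p⃗') be partition parameters on M = [m], and let Δ = Σ_{i: |P_i|>0} Σ_{i': |P'_{i'}|>0} p_i p'_{i'} |P_i ∩ P'_{i'}| / (|P_i|·|P'_{i'}|). If U and U' are independent samples from the uniform distributions PC(k, P⃗, p⃗) and PC(k', P⃗', p⃗') respectively, then for all ε > 0, Pr(|U ∩ U'| < Δ − εm) ≤ exp(−ε²(m − Δ)/3). -/

import Mathlib

/-!
Let `α z = p_i / |P_i|` for `z ∈ P_i` and `β z = p'_j / |P'_j|` for `z ∈ P'_j` be the marginals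
of `U` and `U'`, so that `Δ = ∑ z, α z β z`. The indicators of `z ∉ U ∩ U'` are negatively
correlated: `Pr[S ∩ U ∩ U' = ∅] ≤ ∏ z ∈ S, (1 - α z β z)` for every `S`. Conditioning on one
sample and factoring over the blocks, this reduces to the single-block inequality
`∑_{|A| = p, A ⊆ N} ∏ z ∈ A, (1 - c z) ≤ C(n, p) ∏ z ∈ N, (1 - (p / n) c z)` for `c ∈ [0,1]^N`.
Both sides are affine in each `c z`, so it suffices to check `c ∈ {0,1}^N`, where it reads
`C(j, p) ≤ C(n, p) (1 - p / n)^(n - j)`. Negative correlation bounds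
`E[(1 + ε)^{#(U ∩ U')ᶜ}] ≤ exp (ε (m - Δ))`, and Markov's inequality with
`log (1 + ε) ≥ 2ε / (2 + ε)` gives the claim for `ε ≤ 1`; for `ε > 1` the event is empty.
-/

open Finset Function

theorem cast_choose_le_choose_succ_mul {n j p : ℕ} (hp : p ≤ n) (hj : j < n) :
    (j.choose p : ℝ) ≤ (j + 1).choose p * (1 - p / n) := by
  have hn : (0 : ℝ) < n := by exact_mod_cast hj.trans_le' (Nat.zero_le j)
  rcases lt_or_ge j p with hjp | hpj
  · rw [Nat.choose_eq_zero_of_lt hjp, Nat.cast_zero]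
    have : (p : ℝ) / n ≤ 1 := div_le_one_of_le₀ (by exact_mod_cast hp) hn.le
    exact mul_nonneg (Nat.cast_nonneg _) (by linarith)
  · have hrec : (j.choose p : ℝ) * (j + 1) = (j + 1).choose p * (j + 1 - p) := by
      have := congrArg (Nat.cast (R := ℝ)) (Nat.choose_mul_succ_eq j p)
      push_cast [Nat.cast_sub (show p ≤ j + 1 by omega)] at this
      exact this
    have hle : (p : ℝ) / n ≤ p / (j + 1) :=
      div_le_div_of_nonneg_left (Nat.cast_nonneg p) (by positivity) (by exact_mod_cast hj)
    calc (j.choose p : ℝ) = (j + 1).choose p * (1 - p / (j + 1)) := by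
          field_simp; linarith
      _ ≤ (j + 1).choose p * (1 - p / n) := by gcongr

theorem cast_choose_le_choose_mul_pow {n j p : ℕ} (hp : p ≤ n) (hj : j ≤ n) :
    (j.choose p : ℝ) ≤ n.choose p * (1 - p / n) ^ (n - j) := by
  have hfactor : 0 ≤ 1 - (p : ℝ) / n := by
    rcases Nat.eq_zero_or_pos n with rfl | hn
    · simp
    · linarith [div_le_one_of_le₀ (by exact_mod_cast hp : (p : ℝ) ≤ n) (Nat.cast_nonneg n)]
  suffices ∀ d j, j + d = n → (j.choose p : ℝ) ≤ n.choose p * (1 - p / n) ^ d from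
    this (n - j) j (by omega)
  intro d
  induction d with
  | zero => intro j hj; simp [show j = n by omega]
  | succ d ih =>
    intro j hj
    calc (j.choose p : ℝ) ≤ (j + 1).choose p * (1 - p / n) :=
          cast_choose_le_choose_succ_mul hp (by omega)
      _ ≤ n.choose p * (1 - p / n) ^ d * (1 - p / n) :=
          mul_le_mul_of_nonneg_right (ih (j + 1) (by omega)) hfactor
      _ = n.choose p * (1 - p / n) ^ (d + 1) := by ring

section Multiaffine

variable {ι : Type*} [DecidableEq ι]

def IsMultiaffine (f : (ι → ℝ) → ℝ) : Prop :=
  ∀ c a t, f (update c a t) = (1 - t) * f (update c a 0) + t * f (update c a 1)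

theorem isMultiaffine_prod (A : Finset ι) {g : ι → ℝ → ℝ}
    (hg : ∀ z t, g z t = (1 - t) * g z 0 + t * g z 1) :
    IsMultiaffine fun c => ∏ z ∈ A, g z (c z) := by
  intro c a t
  by_cases ha : a ∈ A
  · have h : ∀ s, ∏ z ∈ A, g z (update c a s z) = g a s * ∏ z ∈ A.erase a, g z (c z) := by
      intro s
      rw [← mul_prod_erase A _ ha, update_self]
      congr 1
      exact prod_congr rfl fun z hz => by rw [update_of_ne (ne_of_mem_erase hz)]
    simp only [h, hg a t]
    ring
  · have h : ∀ s, ∏ z ∈ A, g z (update c a s z) = ∏ z ∈ A, g z (c z) := fun s =>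
      prod_congr rfl fun z hz => by rw [update_of_ne (ne_of_mem_of_not_mem hz ha)]
    simp only [h]
    ring

theorem IsMultiaffine.sum {κ : Type*} {s : Finset κ} {f : κ → (ι → ℝ) → ℝ}
    (hf : ∀ i ∈ s, IsMultiaffine (f i)) : IsMultiaffine fun c => ∑ i ∈ s, f i c := by
  intro c a t
  simp only [mul_sum, ← sum_add_distrib]
  exact sum_congr rfl fun i hi => hf i hi c a t

theorem IsMultiaffine.const_mul {f : (ι → ℝ) → ℝ} (hf : IsMultiaffine f) (r : ℝ) :
    IsMultiaffine fun c => r * f c := by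
  intro c a t
  dsimp only
  rw [hf c a t]
  ring

theorem IsMultiaffine.le_of_le_on_vertices [Fintype ι] {f g : (ι → ℝ) → ℝ}
    (hf : IsMultiaffine f) (hg : IsMultiaffine g)
    (hvert : ∀ c : ι → ℝ, (∀ z, c z = 0 ∨ c z = 1) → f c ≤ g c)
    {c : ι → ℝ} (hc : ∀ z, c z ∈ Set.Icc 0 1) : f c ≤ g c := by
  suffices ∀ T : Finset ι, ∀ c : ι → ℝ, (∀ z, c z ∈ Set.Icc 0 1) →
      (∀ z ∉ T, c z = 0 ∨ c z = 1) → f c ≤ g c from this univ c hc (by simp)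
  intro T
  induction T using Finset.induction_on with
  | empty => exact fun c _ hbin => hvert c fun z => hbin z (notMem_empty z)
  | insert a T _ ih =>
    intro c hc hbin
    have hvertex : ∀ t : ℝ, (t = 0 ∨ t = 1) → f (update c a t) ≤ g (update c a t) := by
      intro t ht
      refine ih _ (fun z => ?_) (fun z hz => ?_)
      · rcases eq_or_ne z a with rfl | hza
        · rcases ht with rfl | rfl <;> simp
        · simpa [update_of_ne hza] using hc z
      · rcases eq_or_ne z a with rfl | hza
        · simpa using ht
        · simpa [update_of_ne hza] using hbin z (by simp [hza, hz])
    have hf' := hf c a (c a)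
    have hg' := hg c a (c a)
    rw [update_eq_self] at hf' hg'
    rw [hf', hg']
    obtain ⟨hc0, hc1⟩ := hc a
    linarith [mul_le_mul_of_nonneg_left (hvertex 0 (Or.inl rfl)) (sub_nonneg.mpr hc1),
      mul_le_mul_of_nonneg_left (hvertex 1 (Or.inr rfl)) hc0]

end Multiaffine

theorem sum_powersetCard_prod_one_sub_le_of_boolean {ι : Type*} (N : Finset ι) {p : ℕ}
    (hp : p ≤ #N) {c : ι → ℝ} (hc : ∀ z, c z = 0 ∨ c z = 1) :
    ∑ A ∈ N.powersetCard p, ∏ z ∈ A, (1 - c z)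
      ≤ (#N).choose p * ∏ z ∈ N, (1 - p / #N * c z) := by
  set J := N.filter (c · = 0)
  have hprod : ∀ A : Finset ι, ∏ z ∈ A, (1 - c z) = if ∀ z ∈ A, c z = 0 then 1 else 0 := by
    intro A
    rw [← prod_boole]
    exact prod_congr rfl fun z _ => by rcases hc z with h | h <;> simp [h]
  have hcount : ∑ A ∈ N.powersetCard p, ∏ z ∈ A, (1 - c z) = (#J).choose p := by
    simp only [hprod, sum_boole, ← card_powersetCard]
    congr 2
    ext A
    simp only [mem_filter, mem_powersetCard, J, subset_iff]
    grind
  have hweight : ∏ z ∈ N, (1 - p / #N * c z) = (1 - p / #N) ^ (#N - #J) := by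
    have : ∀ z, (1 - (p : ℝ) / #N * c z) = if c z = 0 then 1 else 1 - (p : ℝ) / #N :=
      fun z => by rcases hc z with h | h <;> simp [h]
    rw [prod_congr rfl fun z _ => this z, prod_ite, prod_const_one, one_mul, prod_const,
      ← card_filter_add_card_filter_not (s := N) (p := (c · = 0)), Nat.add_sub_cancel_left]
  rw [hcount, hweight]
  exact cast_choose_le_choose_mul_pow hp (card_le_card (filter_subset _ _))

/-- Sampling `p` of the `n` points of `N` without replacement is dominated, for products of
`1 - c z`, by sampling each point independently with probability `p / n`. -/
theorem sum_powersetCard_prod_one_sub_le {ι : Type*} [Fintype ι] [DecidableEq ι] (N : Finset ι)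
    {p : ℕ} (hp : p ≤ #N) {c : ι → ℝ} (hc : ∀ z, c z ∈ Set.Icc 0 1) :
    ∑ A ∈ N.powersetCard p, ∏ z ∈ A, (1 - c z)
      ≤ (#N).choose p * ∏ z ∈ N, (1 - p / #N * c z) :=
  IsMultiaffine.le_of_le_on_vertices
    (f := fun c => ∑ A ∈ N.powersetCard p, ∏ z ∈ A, (1 - c z))
    (g := fun c => (#N).choose p * ∏ z ∈ N, (1 - p / #N * c z))
    (IsMultiaffine.sum fun A _ =>
      isMultiaffine_prod A (g := fun _ t => 1 - t) fun _ _ => by ring)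
    ((isMultiaffine_prod N (g := fun _ t => 1 - p / #N * t) fun _ _ => by ring).const_mul _)
    (fun _ hbin => sum_powersetCard_prod_one_sub_le_of_boolean N hp hbin) hc

section PartitionConstrained

variable {ι κ : Type*} [DecidableEq ι] [Fintype κ]

/-- The support of the paper's distribution `PC(k, P, p)`. -/
def pcFamily [Fintype ι] (P : κ → Finset ι) (p : κ → ℕ) : Finset (Finset ι) :=
  univ.filter fun U => ∀ i, #(U ∩ P i) = p i

/-- The marginal `Pr[z ∈ U]` under `PC(k, P, p)` when `P` is a partition. -/
noncomputable def blockDensity (P : κ → Finset ι) (p : κ → ℕ) (z : ι) : ℝ :=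
  ∑ i, if z ∈ P i then (p i : ℝ) / #(P i) else 0

variable {P : κ → Finset ι} {p : κ → ℕ}

theorem biUnion_inter_eq_self (hcover : ∀ z, ∃ i, z ∈ P i) (T : Finset ι) :
    univ.biUnion (fun i => T ∩ P i) = T := by
  ext z
  simp only [mem_biUnion, mem_univ, true_and, mem_inter]
  exact ⟨fun ⟨_, hz, _⟩ => hz, fun hz => (hcover z).imp fun _ hi => ⟨hz, hi⟩⟩

theorem biUnion_inter_eq_of_subset (hdisj : Pairwise (Disjoint on P)) {A : κ → Finset ι}
    (hA : ∀ i, A i ⊆ P i) (i : κ) : univ.biUnion A ∩ P i = A i := by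
  ext z
  simp only [mem_inter, mem_biUnion, mem_univ, true_and]
  refine ⟨fun ⟨⟨j, hzj⟩, hzi⟩ => ?_, fun hz => ⟨⟨i, hz⟩, hA i hz⟩⟩
  obtain rfl | hji := eq_or_ne j i
  · exact hzj
  · exact absurd hzi (disjoint_left.mp (hdisj hji) (hA j hzj))

theorem prod_eq_prod_prod_inter {M : Type*} [CommMonoid M] (hdisj : Pairwise (Disjoint on P))
    (hcover : ∀ z, ∃ i, z ∈ P i) (T : Finset ι) (h : ι → M) :
    ∏ z ∈ T, h z = ∏ i, ∏ z ∈ T ∩ P i, h z := by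
  conv_lhs => rw [← biUnion_inter_eq_self hcover T]
  exact prod_biUnion fun i _ j _ hij => (hdisj hij).mono inter_subset_right inter_subset_right

theorem sum_pcFamily_prod_eq_prod_sum [Fintype ι] [DecidableEq κ] {M : Type*} [CommSemiring M]
    (hdisj : Pairwise (Disjoint on P)) (hcover : ∀ z, ∃ i, z ∈ P i) (f : κ → Finset ι → M) :
    ∑ U ∈ pcFamily P p, ∏ i, f i (U ∩ P i) = ∏ i, ∑ A ∈ (P i).powersetCard (p i), f i A := by
  rw [prod_univ_sum]
  refine sum_nbij' (fun U i => U ∩ P i) (fun A => univ.biUnion A) ?_ ?_ ?_ ?_ fun _ _ => rfl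
  · intro U hU
    simp only [pcFamily, mem_filter] at hU
    simp [Fintype.mem_piFinset, mem_powersetCard, hU.2]
  · intro A hA
    have hA' := Fintype.mem_piFinset.mp hA
    have hsub : ∀ i, A i ⊆ P i := fun i => (mem_powersetCard.mp (hA' i)).1
    simp only [pcFamily, mem_filter, mem_univ, true_and, biUnion_inter_eq_of_subset hdisj hsub]
    exact fun i => (mem_powersetCard.mp (hA' i)).2
  · exact fun U _ => biUnion_inter_eq_self hcover U
  · intro A hA
    have hsub : ∀ i, A i ⊆ P i := fun i =>
      (mem_powersetCard.mp (Fintype.mem_piFinset.mp hA i)).1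
    exact funext (biUnion_inter_eq_of_subset hdisj hsub)

theorem card_pcFamily [Fintype ι] [DecidableEq κ] (hdisj : Pairwise (Disjoint on P))
    (hcover : ∀ z, ∃ i, z ∈ P i) : #(pcFamily P p) = ∏ i, (#(P i)).choose (p i) := by
  simpa using sum_pcFamily_prod_eq_prod_sum (p := p) hdisj hcover (M := ℕ) fun _ _ => 1

theorem blockDensity_eq (hdisj : Pairwise (Disjoint on P)) {z : ι} {i : κ} (hz : z ∈ P i) :
    blockDensity P p z = p i / #(P i) := by
  rw [blockDensity, sum_eq_single i (fun j _ hji => if_neg fun hzj =>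
    disjoint_left.mp (hdisj hji) hzj hz) (by simp), if_pos hz]

theorem blockDensity_mem_Icc (hdisj : Pairwise (Disjoint on P)) (hcover : ∀ z, ∃ i, z ∈ P i)
    (hp : ∀ i, p i ≤ #(P i)) (z : ι) : blockDensity P p z ∈ Set.Icc 0 1 := by
  obtain ⟨i, hz⟩ := hcover z
  rw [blockDensity_eq hdisj hz]
  exact ⟨by positivity, div_le_one_of_le₀ (by exact_mod_cast hp i) (Nat.cast_nonneg _)⟩

theorem blockDensity_mul_blockDensity_mem_Icc {κ' : Type*} [Fintype κ'] {Q : κ' → Finset ι}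
    {q : κ' → ℕ} (hPdisj : Pairwise (Disjoint on P))
    (hPcover : ∀ z, ∃ i, z ∈ P i) (hp : ∀ i, p i ≤ #(P i)) (hQdisj : Pairwise (Disjoint on Q))
    (hQcover : ∀ z, ∃ j, z ∈ Q j) (hq : ∀ j, q j ≤ #(Q j)) (z : ι) :
    blockDensity P p z * blockDensity Q q z ∈ Set.Icc 0 1 := by
  obtain ⟨hα0, hα1⟩ := blockDensity_mem_Icc hPdisj hPcover hp z
  obtain ⟨hβ0, hβ1⟩ := blockDensity_mem_Icc hQdisj hQcover hq z
  exact ⟨mul_nonneg hα0 hβ0, mul_le_one₀ hα1 hβ0 hβ1⟩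

theorem sum_pcFamily_prod_one_sub_le [Fintype ι] [DecidableEq κ]
    (hdisj : Pairwise (Disjoint on P)) (hcover : ∀ z, ∃ i, z ∈ P i) (hp : ∀ i, p i ≤ #(P i))
    {c : ι → ℝ} (hc : ∀ z, c z ∈ Set.Icc 0 1) :
    ∑ U ∈ pcFamily P p, ∏ z ∈ U, (1 - c z)
      ≤ #(pcFamily P p) * ∏ z, (1 - blockDensity P p z * c z) := by
  have hblock : ∀ i, ∏ z ∈ P i, (1 - p i / #(P i) * c z)
      = ∏ z ∈ P i, (1 - blockDensity P p z * c z) := fun i =>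
    prod_congr rfl fun z hz => by rw [blockDensity_eq hdisj hz]
  calc ∑ U ∈ pcFamily P p, ∏ z ∈ U, (1 - c z)
      = ∏ i, ∑ A ∈ (P i).powersetCard (p i), ∏ z ∈ A, (1 - c z) := by
        rw [← sum_pcFamily_prod_eq_prod_sum hdisj hcover]
        exact sum_congr rfl fun U _ => prod_eq_prod_prod_inter hdisj hcover U _
    _ ≤ ∏ i, ((#(P i)).choose (p i) * ∏ z ∈ P i, (1 - p i / #(P i) * c z)) :=
        prod_le_prod (fun i _ => sum_nonneg fun A _ => prod_nonneg fun z _ =>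
          sub_nonneg.mpr (hc z).2) fun i _ => sum_powersetCard_prod_one_sub_le (P i) (hp i) hc
    _ = #(pcFamily P p) * ∏ z, (1 - blockDensity P p z * c z) := by
        rw [prod_mul_distrib, card_pcFamily hdisj hcover, Nat.cast_prod,
          prod_eq_prod_prod_inter hdisj hcover univ]
        simp only [univ_inter, hblock]

theorem sum_blockDensity_mul_blockDensity [Fintype ι] {κ' : Type*} [Fintype κ']
    (P : κ → Finset ι) (p : κ → ℕ) (Q : κ' → Finset ι) (q : κ' → ℕ) :
    ∑ z, blockDensity P p z * blockDensity Q q z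
      = ∑ i ∈ univ.filter (fun i => 0 < #(P i)), ∑ j ∈ univ.filter (fun j => 0 < #(Q j)),
          (p i : ℝ) * q j * #(P i ∩ Q j) / (#(P i) * #(Q j)) := by
  have hterm : ∀ i j, ∑ z, (if z ∈ P i then (p i : ℝ) / #(P i) else 0) *
      (if z ∈ Q j then (q j : ℝ) / #(Q j) else 0)
      = (p i : ℝ) * q j * #(P i ∩ Q j) / (#(P i) * #(Q j)) := by
    intro i j
    simp only [ite_zero_mul_ite_zero, ← mem_inter, sum_ite_mem, univ_inter, sum_const,
      nsmul_eq_mul]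
    ring
  have hempty : ∀ i j, (#(P i) = 0 ∨ #(Q j) = 0) →
      (p i : ℝ) * q j * #(P i ∩ Q j) / (#(P i) * #(Q j)) = 0 := by
    rintro i j (h | h) <;> simp [h]
  have hsum : ∑ z, blockDensity P p z * blockDensity Q q z
      = ∑ i, ∑ j, (p i : ℝ) * q j * #(P i ∩ Q j) / (#(P i) * #(Q j)) := by
    simp only [blockDensity, sum_mul_sum]
    rw [sum_comm]
    exact sum_congr rfl fun i _ => sum_comm.trans (sum_congr rfl fun j _ => hterm i j)
  rw [hsum, eq_comm, sum_filter_of_ne (p := fun i => 0 < #(P i)) fun i _ hi =>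
    Nat.pos_of_ne_zero fun h => hi (sum_eq_zero fun j _ => hempty i j (Or.inl h))]
  exact sum_congr rfl fun i _ => sum_filter_of_ne fun j _ hj =>
    Nat.pos_of_ne_zero fun h => hj (hempty i j (Or.inr h))

theorem prod_one_sub_ite_mem {ι : Type*} [DecidableEq ι] (s t : Finset ι) (f : ι → ℝ) :
    ∏ z ∈ s, (1 - if z ∈ t then f z else 0) = ∏ z ∈ s ∩ t, (1 - f z) := by
  rw [← prod_ite_mem]
  exact prod_congr rfl fun z _ => by split_ifs <;> simp

/-- Negative correlation of the events `z ∉ U ∩ U'`: condition on `U`, bound the count of `U'`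
avoiding `S ∩ U`, then average the resulting weight over `U`. -/
theorem card_filter_subset_compl_inter_le [Fintype ι] [DecidableEq κ] {κ' : Type*} [Fintype κ']
    [DecidableEq κ'] {Q : κ' → Finset ι} {q : κ' → ℕ}
    (hPdisj : Pairwise (Disjoint on P)) (hPcover : ∀ z, ∃ i, z ∈ P i) (hp : ∀ i, p i ≤ #(P i))
    (hQdisj : Pairwise (Disjoint on Q)) (hQcover : ∀ z, ∃ j, z ∈ Q j) (hq : ∀ j, q j ≤ #(Q j))
    (S : Finset ι) :
    (#{UU ∈ pcFamily P p ×ˢ pcFamily Q q | S ⊆ (UU.1 ∩ UU.2)ᶜ} : ℝ)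
      ≤ #(pcFamily P p ×ˢ pcFamily Q q) *
          ∏ z ∈ S, (1 - blockDensity P p z * blockDensity Q q z) := by
  have hindicator : ∀ U U' : Finset ι, (if S ⊆ (U ∩ U')ᶜ then (1 : ℝ) else 0)
      = ∏ z ∈ U', (1 - if z ∈ S ∩ U then 1 else 0) := by
    intro U U'
    have hset : U' ∩ (S ∩ U) = S ∩ (U ∩ U') := by ext; simp only [mem_inter]; tauto
    rw [prod_one_sub_ite_mem, sub_self, prod_const, hset]
    split_ifs with h <;> rw [subset_compl_iff_disjoint_right] at h
    · rw [disjoint_iff_inter_eq_empty.mp h, card_empty, pow_zero]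
    · exact (zero_pow (card_ne_zero.mpr (not_disjoint_iff_nonempty_inter.mp h))).symm
  calc (#{UU ∈ pcFamily P p ×ˢ pcFamily Q q | S ⊆ (UU.1 ∩ UU.2)ᶜ} : ℝ)
      = ∑ U ∈ pcFamily P p, ∑ U' ∈ pcFamily Q q,
          ∏ z ∈ U', (1 - if z ∈ S ∩ U then 1 else 0) := by
        simp only [card_filter, Nat.cast_sum, Nat.cast_ite, Nat.cast_one, Nat.cast_zero,
          sum_product, hindicator]
    _ ≤ ∑ U ∈ pcFamily P p,
          #(pcFamily Q q) * ∏ z ∈ U, (1 - if z ∈ S then blockDensity Q q z else 0) := by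
        gcongr with U
        refine (sum_pcFamily_prod_one_sub_le hQdisj hQcover hq fun z => ?_).trans_eq ?_
        · split_ifs <;> simp
        · simp only [mul_ite, mul_one, mul_zero, prod_one_sub_ite_mem, univ_inter, inter_comm]
    _ = #(pcFamily Q q) *
          ∑ U ∈ pcFamily P p, ∏ z ∈ U, (1 - if z ∈ S then blockDensity Q q z else 0) :=
        (mul_sum ..).symm
    _ ≤ #(pcFamily Q q) * (#(pcFamily P p) *
          ∏ z, (1 - blockDensity P p z * if z ∈ S then blockDensity Q q z else 0)) := by
        gcongr
        refine sum_pcFamily_prod_one_sub_le hPdisj hPcover hp fun z => ?_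
        split_ifs
        · exact blockDensity_mem_Icc hQdisj hQcover hq z
        · simp
    _ = #(pcFamily P p ×ˢ pcFamily Q q) *
          ∏ z ∈ S, (1 - blockDensity P p z * blockDensity Q q z) := by
        simp only [mul_ite, mul_zero, prod_one_sub_ite_mem, univ_inter, card_product,
          Nat.cast_mul]
        ring

end PartitionConstrained

section Chernoff

variable {Ω ι : Type*} [Fintype ι] [DecidableEq ι]

theorem sum_one_add_pow_card_le (s : Finset Ω) (X : Ω → Finset ι) {q : ι → ℝ}
    (hq : ∀ z, 0 ≤ q z) (hX : ∀ S : Finset ι, (#{ω ∈ s | S ⊆ X ω} : ℝ) ≤ #s * ∏ z ∈ S, q z)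
    {ε : ℝ} (hε : 0 ≤ ε) :
    ∑ ω ∈ s, (1 + ε) ^ #(X ω) ≤ #s * Real.exp (ε * ∑ z, q z) := by
  have hexpand : ∀ ω, (1 + ε) ^ #(X ω) = ∑ S : Finset ι, if S ⊆ X ω then ε ^ #S else 0 := by
    intro ω
    rw [← sum_filter, filter_subset_univ, ← prod_const, prod_one_add]
    simp only [prod_const]
  calc ∑ ω ∈ s, (1 + ε) ^ #(X ω) = ∑ S : Finset ι, ε ^ #S * #{ω ∈ s | S ⊆ X ω} := by
        simp only [hexpand]
        rw [sum_comm]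
        refine sum_congr rfl fun S _ => ?_
        rw [← sum_filter, sum_const, nsmul_eq_mul, mul_comm]
    _ ≤ ∑ S : Finset ι, ε ^ #S * (#s * ∏ z ∈ S, q z) := by
        gcongr with S
        exact hX S
    _ = #s * ∏ z, (1 + ε * q z) := by
        rw [prod_one_add, powerset_univ, mul_sum]
        refine sum_congr rfl fun S _ => ?_
        rw [prod_mul_distrib, prod_const]
        ring
    _ ≤ #s * Real.exp (ε * ∑ z, q z) := by
        rw [mul_sum, Real.exp_sum]
        exact mul_le_mul_of_nonneg_left (prod_le_prod
          (fun z _ => add_nonneg zero_le_one (mul_nonneg hε (hq z)))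
          fun z _ => by linarith [Real.add_one_le_exp (ε * q z)]) (Nat.cast_nonneg _)

theorem mul_add_sq_mul_div_three_le_mul_log_one_add {ε μ t : ℝ} (hε0 : 0 ≤ ε) (hε1 : ε ≤ 1)
    (hμ : 0 ≤ μ) (ht : (1 + ε) * μ ≤ t) : ε * μ + ε ^ 2 * μ / 3 ≤ t * Real.log (1 + ε) := by
  have hsplit : (1 + ε) * μ * (2 * ε / (ε + 2))
      = ε * μ + ε ^ 2 * μ / 3 + ε ^ 2 * (1 - ε) * μ / (3 * (ε + 2)) := by
    field_simp
    ring
  have hrest : 0 ≤ ε ^ 2 * (1 - ε) * μ / (3 * (ε + 2)) :=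
    div_nonneg (mul_nonneg (mul_nonneg (sq_nonneg ε) (by linarith)) hμ) (by positivity)
  calc ε * μ + ε ^ 2 * μ / 3 ≤ (1 + ε) * μ * (2 * ε / (ε + 2)) := by linarith
    _ ≤ t * Real.log (1 + ε) :=
        mul_le_mul ht (Real.le_log_one_add_of_nonneg hε0) (by positivity)
          (le_trans (by positivity) ht)

/-- The generalized Chernoff bound of Panconesi and Srinivasan: the joint bounds `hX` take the
place of independence. -/
theorem card_filter_le_card_mul_exp (s : Finset Ω) (X : Ω → Finset ι) {q : ι → ℝ}
    (hq : ∀ z, 0 ≤ q z) (hX : ∀ S : Finset ι, (#{ω ∈ s | S ⊆ X ω} : ℝ) ≤ #s * ∏ z ∈ S, q z)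
    {ε μ t : ℝ} (hε0 : 0 < ε) (hε1 : ε ≤ 1) (hμ : ∑ z, q z ≤ μ) (ht : (1 + ε) * μ ≤ t) :
    (#{ω ∈ s | t ≤ #(X ω)} : ℝ) ≤ #s * Real.exp (-(ε ^ 2) * μ / 3) := by
  have hbase : (0 : ℝ) < 1 + ε := by linarith
  have hmarkov : (#{ω ∈ s | t ≤ #(X ω)} : ℝ) * (1 + ε) ^ t ≤ ∑ ω ∈ s, (1 + ε) ^ #(X ω) :=
    calc (#{ω ∈ s | t ≤ #(X ω)} : ℝ) * (1 + ε) ^ t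
        = ∑ ω ∈ s with t ≤ #(X ω), (1 + ε) ^ t := by rw [sum_const, nsmul_eq_mul]
      _ ≤ ∑ ω ∈ s with t ≤ #(X ω), (1 + ε) ^ #(X ω) := sum_le_sum fun ω hω => by
          rw [← Real.rpow_natCast]
          exact Real.rpow_le_rpow_of_exponent_le (by linarith) (mem_filter.mp hω).2
      _ ≤ ∑ ω ∈ s, (1 + ε) ^ #(X ω) :=
          sum_le_sum_of_subset_of_nonneg (filter_subset _ _) fun _ _ _ => by positivity
  have hexponent : Real.exp (ε * μ) ≤ Real.exp (-(ε ^ 2) * μ / 3) * (1 + ε) ^ t := by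
    rw [Real.rpow_def_of_pos hbase, ← Real.exp_add, Real.exp_le_exp]
    linarith [mul_add_sq_mul_div_three_le_mul_log_one_add hε0.le hε1
      ((sum_nonneg fun z _ => hq z).trans hμ) ht]
  refine le_of_mul_le_mul_right ?_ (Real.rpow_pos_of_pos hbase t)
  calc (#{ω ∈ s | t ≤ #(X ω)} : ℝ) * (1 + ε) ^ t
      ≤ #s * Real.exp (ε * ∑ z, q z) :=
        hmarkov.trans (sum_one_add_pow_card_le s X hq hX hε0.le)
    _ ≤ #s * (Real.exp (-(ε ^ 2) * μ / 3) * (1 + ε) ^ t) := by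
        gcongr
        exact hexponent.trans' (Real.exp_le_exp.mpr (by gcongr))
    _ = #s * Real.exp (-(ε ^ 2) * μ / 3) * (1 + ε) ^ t := by ring

end Chernoff

section Concentration

variable {ι κ κ' : Type*} [Fintype ι] [DecidableEq ι] [Fintype κ] [DecidableEq κ]
  [Fintype κ'] [DecidableEq κ'] {P : κ → Finset ι} {p : κ → ℕ} {Q : κ' → Finset ι} {q : κ' → ℕ}

theorem card_filter_card_inter_lt_le (hPdisj : Pairwise (Disjoint on P))
    (hPcover : ∀ z, ∃ i, z ∈ P i) (hp : ∀ i, p i ≤ #(P i)) (hQdisj : Pairwise (Disjoint on Q))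
    (hQcover : ∀ z, ∃ j, z ∈ Q j) (hq : ∀ j, q j ≤ #(Q j)) {ε : ℝ} (hε : 0 < ε) :
    (#{UU ∈ pcFamily P p ×ˢ pcFamily Q q | (#(UU.1 ∩ UU.2) : ℝ)
        < ∑ z, blockDensity P p z * blockDensity Q q z - ε * Fintype.card ι} : ℝ)
      ≤ #(pcFamily P p ×ˢ pcFamily Q q) * Real.exp (-(ε ^ 2) *
          (Fintype.card ι - ∑ z, blockDensity P p z * blockDensity Q q z) / 3) := by
  set Δ := ∑ z, blockDensity P p z * blockDensity Q q z
  have hmarginal := blockDensity_mul_blockDensity_mem_Icc hPdisj hPcover hp hQdisj hQcover hq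
  have hΔ0 : 0 ≤ Δ := sum_nonneg fun z _ => (hmarginal z).1
  have hΔle : Δ ≤ Fintype.card ι := by
    simpa using sum_le_sum fun z (_ : z ∈ univ) => (hmarginal z).2
  rcases le_or_gt ε 1 with hε1 | hε1
  · have hbad : ∀ UU : Finset ι × Finset ι, (#(UU.1 ∩ UU.2) : ℝ) < Δ - ε * Fintype.card ι →
        Fintype.card ι - Δ + ε * Fintype.card ι ≤ #(UU.1 ∩ UU.2)ᶜ := by
      intro UU h
      rw [card_compl, Nat.cast_sub (card_le_univ _)]
      linarith
    have hmean : ∑ z, (1 - blockDensity P p z * blockDensity Q q z) ≤ Fintype.card ι - Δ := by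
      simp [sum_sub_distrib, Δ]
    calc _ ≤ (#{UU ∈ pcFamily P p ×ˢ pcFamily Q q |
            Fintype.card ι - Δ + ε * Fintype.card ι ≤ #(UU.1 ∩ UU.2)ᶜ} : ℝ) := by
          exact_mod_cast card_le_card (monotone_filter_right _ fun UU _ => hbad UU)
      _ ≤ _ := card_filter_le_card_mul_exp (pcFamily P p ×ˢ pcFamily Q q)
            (fun UU : Finset ι × Finset ι => (UU.1 ∩ UU.2)ᶜ)
            (q := fun z => 1 - blockDensity P p z * blockDensity Q q z)
            (fun z => sub_nonneg.mpr (hmarginal z).2)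
            (card_filter_subset_compl_inter_le hPdisj hPcover hp hQdisj hQcover hq) hε hε1 hmean
            (by nlinarith)
  · have hempty : {UU ∈ pcFamily P p ×ˢ pcFamily Q q |
        (#(UU.1 ∩ UU.2) : ℝ) < Δ - ε * Fintype.card ι} = ∅ :=
      filter_eq_empty_iff.mpr fun UU _ => not_lt.mpr <| by
        nlinarith [Nat.cast_nonneg (α := ℝ) #(UU.1 ∩ UU.2)]
    rw [hempty, card_empty, Nat.cast_zero]
    positivity

end Concentration

/-- Concentration of the intersection of two independent conditionally-uniform samples
(`Lemma 4.2` / `lemma:pcdist`): with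
`Δ = Σ_{i,i'} p_i p'_{i'} |P_i ∩ Q_{i'}| / (|P_i|·|Q_{i'}|)`, for all `ε > 0`,
`Pr(|U ∩ U'| < Δ − εm) ≤ exp(−ε²(m − Δ)/3)`. -/
theorem pc_intersection_concentration (m k k' : ℕ)
    (P : Fin k → Finset (Fin m)) (pvec : Fin k → ℕ)
    (Q : Fin k' → Finset (Fin m)) (qvec : Fin k' → ℕ)
    (hPdisj : ∀ i j, i ≠ j → Disjoint (P i) (P j))
    (hPcover : ∀ z : Fin m, ∃ i, z ∈ P i)
    (hple : ∀ i, pvec i ≤ (P i).card)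
    (hQdisj : ∀ i j, i ≠ j → Disjoint (Q i) (Q j))
    (hQcover : ∀ z : Fin m, ∃ i, z ∈ Q i)
    (hqle : ∀ i, qvec i ≤ (Q i).card)
    (F F' : Finset (Finset (Fin m)))
    (hF : F = Finset.univ.filter (fun U : Finset (Fin m) => ∀ i, (U ∩ P i).card = pvec i))
    (hF' : F' = Finset.univ.filter
      (fun U : Finset (Fin m) => ∀ i, (U ∩ Q i).card = qvec i))
    (Δ : ℝ)
    (hΔ : Δ = ∑ i ∈ Finset.univ.filter (fun i : Fin k => 0 < (P i).card),
            ∑ i' ∈ Finset.univ.filter (fun i' : Fin k' => 0 < (Q i').card),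
              (pvec i : ℝ) * (qvec i' : ℝ) * ((P i ∩ Q i').card : ℝ) /
                (((P i).card : ℝ) * ((Q i').card : ℝ)))
    (ε : ℝ) (hε : 0 < ε) :
    (((F ×ˢ F').filter
        (fun UU => ((UU.1 ∩ UU.2).card : ℝ) < Δ - ε * m)).card : ℝ) /
        ((F.card : ℝ) * (F'.card : ℝ))
      ≤ Real.exp (-(ε ^ 2) * ((m : ℝ) - Δ) / 3) := by
  -- The statement decides `∀ i : Fin k, _` by `Nat.decidableForallFin`, `pcFamily` generically.
  replace hF : F = pcFamily P pvec := by rw [hF, pcFamily]; congr!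
  replace hF' : F' = pcFamily Q qvec := by rw [hF', pcFamily]; congr!
  subst hF hF' hΔ
  rw [← sum_blockDensity_mul_blockDensity]
  refine div_le_of_le_mul₀ (by positivity) (Real.exp_nonneg _) ?_
  rw [mul_comm (Real.exp _), ← Nat.cast_mul, ← card_product]
  simpa only [Fintype.card_fin] using card_filter_card_inter_lt_le (fun i j => hPdisj i j)
    hPcover hple (fun i j => hQdisj i j) hQcover hqle hε
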